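/- arXiv:math/0405243 — 4 statements merged into one kernel-verified Lean document; each statement's English description precedes it below -/
import Mathlib

section
/- Over ℂ with 0 < q < 1, the Noumi–Mimachi functional h : A(c,d) → ℂ, defined on the PBW basis by h(B^{m+1}A^n) = 0 = h((B*)^{m+1}A^n) and h(A^n) = (f(0)/f(n))·(c^{n+1} − (−d)^{n+1})/(c+d) where f(n) = q^{-2} − q^{2n}, satisfies the modular property h(xy) = h(y σ_mod(x)) for all x, y ∈ A(c,d), where σ_mod(A) = A, σ_mod(B) = q^{-2}B, σ_mod(B*) = q^2 B*. -/
/-- The defining relations of the Podleś quantum sphere coordinate algebra `A(c,d)`: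
`BA = q²AB`, `AB* = q²B*A`, `B*B = cd + (c-d)A - A²`, `BB* = cd + q²(c-d)A - q⁴A²`,
where the generators `A, B, B*` are the images of `0, 1, 2 : Fin 3`. -/
inductive PodlesRel (k : Type) [Field k] (q c d : k) :
    FreeAlgebra k (Fin 3) → FreeAlgebra k (Fin 3) → Prop
  | BA : PodlesRel k q c d (FreeAlgebra.ι k 1 * FreeAlgebra.ι k 0)
      (q ^ 2 • (FreeAlgebra.ι k 0 * FreeAlgebra.ι k 1))
  | ABs : PodlesRel k q c d (FreeAlgebra.ι k 0 * FreeAlgebra.ι k 2)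
      (q ^ 2 • (FreeAlgebra.ι k 2 * FreeAlgebra.ι k 0))
  | BsB : PodlesRel k q c d (FreeAlgebra.ι k 2 * FreeAlgebra.ι k 1)
      (algebraMap k (FreeAlgebra k (Fin 3)) (c * d) + (c - d) • FreeAlgebra.ι k 0 -
        FreeAlgebra.ι k 0 ^ 2)
  | BBs : PodlesRel k q c d (FreeAlgebra.ι k 1 * FreeAlgebra.ι k 2)
      (algebraMap k (FreeAlgebra k (Fin 3)) (c * d) + (q ^ 2 * (c - d)) • FreeAlgebra.ι k 0 -
        q ^ 4 • FreeAlgebra.ι k 0 ^ 2)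

/-- The Podleś quantum sphere coordinate algebra `A(c,d)`. -/
abbrev PodlesAlg (k : Type) [Field k] (q c d : k) := RingQuot (PodlesRel k q c d)

noncomputable def pA (k : Type) [Field k] (q c d : k) : PodlesAlg k q c d :=
  RingQuot.mkAlgHom k (PodlesRel k q c d) (FreeAlgebra.ι k 0)

noncomputable def pB (k : Type) [Field k] (q c d : k) : PodlesAlg k q c d :=
  RingQuot.mkAlgHom k (PodlesRel k q c d) (FreeAlgebra.ι k 1)

noncomputable def pBs (k : Type) [Field k] (q c d : k) : PodlesAlg k q c d :=
  RingQuot.mkAlgHom k (PodlesRel k q c d) (FreeAlgebra.ι k 2)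

/-!
The set of `x` with `h (x * y) = h (y * σ x)` for all `y` is a subalgebra, so it suffices to
take `x ∈ {A, B, B⋆}`; for fixed `x` both sides are linear in `y`, so it suffices to take `y` a
PBW monomial `Bʲ Aⁿ` or `B⋆ʲ Aⁿ`. The commutation relations move a generator across a monomial at
the cost of a power of `q²`, and `h` kills every monomial containing `B` or `B⋆`. The only
nontrivial cases, `x = B, y = B⋆ Aⁿ` and `x = B⋆, y = B Aⁿ`, amount to a three-term recurrence
for the moments `h (Aⁿ)`, which the Noumi–Mimachi moments satisfy because `c` and `-d` are the
roots of `X² - (c - d) X - c d`.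
-/

section QCommute

variable {M R : Type*} [CommMonoid M] [Monoid R] [MulAction M R] [IsScalarTower M R R]
  [SMulCommClass M R R] {t : M} {a b : R}

theorem mul_pow_of_mul_eq_smul (hab : b * a = t • (a * b)) (n : ℕ) :
    b * a ^ n = t ^ n • (a ^ n * b) := by
  induction n with
  | zero => simp
  | succ n ih =>
    rw [pow_succ', ← mul_assoc, hab, smul_mul_assoc, mul_assoc, ih, mul_smul_comm, smul_smul,
      ← mul_assoc, pow_succ, mul_comm t]

theorem pow_mul_of_mul_eq_smul (hab : b * a = t • (a * b)) (n : ℕ) :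
    b ^ n * a = t ^ n • (a * b ^ n) := by
  induction n with
  | zero => simp
  | succ n ih =>
    rw [pow_succ, mul_assoc, hab, mul_smul_comm, ← mul_assoc, ih, smul_mul_assoc, smul_smul,
      mul_assoc, pow_succ']

end QCommute

section Generators

variable {k R M : Type*} [CommSemiring k] [Semiring R] [Algebra k R] [AddCommMonoid M]
  [Module k M]

theorem Submodule.span_eq_top_of_mul_mem {s t : Set R} (hs : Algebra.adjoin k s = ⊤)
    (h1 : 1 ∈ span k t) (hmul : ∀ x ∈ s, ∀ m ∈ t, x * m ∈ span k t) : span k t = ⊤ := by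
  have hgen : ∀ x ∈ s, ∀ m ∈ span k t, x * m ∈ span k t := fun x hx m hm =>
    span_le (p := (span k t).comap (LinearMap.mulLeft k x)) |>.mpr (hmul x hx) hm
  have hall : ∀ x : R, ∀ m ∈ span k t, x * m ∈ span k t := by
    intro x
    induction (hs ▸ Algebra.mem_top : x ∈ Algebra.adjoin k s) using Algebra.adjoin_induction with
    | mem x hx => exact hgen x hx
    | algebraMap r => exact fun m hm => by rw [← Algebra.smul_def]; exact smul_mem _ r hm
    | add x y _ _ hx hy => exact fun m hm => by rw [add_mul]; exact add_mem (hx m hm) (hy m hm)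
    | mul x y _ _ hx hy => exact fun m hm => by rw [mul_assoc]; exact hx _ (hy m hm)
  exact eq_top_iff'.mpr fun x => by simpa using hall x 1 h1

theorem LinearMap.map_mul_eq_smul_of_span_eq_top {t : Set R} (ht : Submodule.span k t = ⊤)
    (h : R →ₗ[k] M) (x z : R) (a : k) (hxz : ∀ y ∈ t, h (x * y) = a • h (y * z)) (y : R) :
    h (x * y) = a • h (y * z) :=
  LinearMap.congr_fun (LinearMap.ext_on ht (f := h ∘ₗ mulLeft k x) (g := a • h ∘ₗ mulRight k z)
    hxz) y

theorem LinearMap.map_mul_eq_map_mul_of_adjoin_eq_top {s : Set R}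
    (hs : Algebra.adjoin k s = ⊤) (h : R →ₗ[k] M) {F : Type*} [FunLike F R R]
    [AlgHomClass F k R R] (σ : F)
    (hgen : ∀ x ∈ s, ∀ y, h (x * y) = h (y * σ x)) (x y : R) : h (x * y) = h (y * σ x) := by
  induction (hs ▸ Algebra.mem_top : x ∈ Algebra.adjoin k s) using Algebra.adjoin_induction
    generalizing y with
  | mem x hx => exact hgen x hx y
  | algebraMap r => rw [AlgHomClass.commutes, Algebra.commutes]
  | add x x' _ _ hx hx' => rw [add_mul, map_add, map_add, mul_add, map_add, hx, hx']
  | mul x x' _ _ hx hx' => rw [mul_assoc, hx, mul_assoc, hx', mul_assoc, map_mul σ]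

end Generators

namespace Podles

variable {k : Type} [Field k] {q c d : k}

local notation "𝐀" => pA k q c d
local notation "𝐁" => pB k q c d
local notation "𝐁⋆" => pBs k q c d

theorem B_mul_A : 𝐁 * 𝐀 = q ^ 2 • (𝐀 * 𝐁) := by
  simpa [pA, pB] using RingQuot.mkAlgHom_rel k (PodlesRel.BA (q := q) (c := c) (d := d))

theorem A_mul_Bs : 𝐀 * 𝐁⋆ = q ^ 2 • (𝐁⋆ * 𝐀) := by
  simpa [pA, pBs] using RingQuot.mkAlgHom_rel k (PodlesRel.ABs (q := q) (c := c) (d := d))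

theorem Bs_mul_B : 𝐁⋆ * 𝐁 = algebraMap k _ (c * d) + (c - d) • 𝐀 - 𝐀 ^ 2 := by
  simpa [pA, pB, pBs] using RingQuot.mkAlgHom_rel k (PodlesRel.BsB (q := q) (c := c) (d := d))

theorem B_mul_Bs : 𝐁 * 𝐁⋆ = algebraMap k _ (c * d) + (q ^ 2 * (c - d)) • 𝐀 - q ^ 4 • 𝐀 ^ 2 := by
  simpa [pA, pB, pBs] using RingQuot.mkAlgHom_rel k (PodlesRel.BBs (q := q) (c := c) (d := d))

theorem adjoin_generators : Algebra.adjoin k {𝐀, 𝐁, 𝐁⋆} = ⊤ := by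
  have : ({𝐀, 𝐁, 𝐁⋆} : Set (PodlesAlg k q c d)) =
      RingQuot.mkAlgHom k (PodlesRel k q c d) '' Set.range (FreeAlgebra.ι k) := by
    ext x
    simp [Fin.exists_fin_succ, pA, pB, pBs, eq_comm]
  rw [this, Algebra.adjoin_image, FreeAlgebra.adjoin_range_ι, Algebra.map_top,
    AlgHom.range_eq_top]
  exact RingQuot.mkAlgHom_surjective k _

theorem A_mul_B_pow (hq : q ≠ 0) (j : ℕ) : 𝐀 * 𝐁 ^ j = ((q ^ 2) ^ j)⁻¹ • (𝐁 ^ j * 𝐀) :=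
  ((inv_smul_eq_iff₀ (by positivity)).mpr (pow_mul_of_mul_eq_smul B_mul_A j)).symm

theorem A_pow_mul_B (hq : q ≠ 0) (n : ℕ) : 𝐀 ^ n * 𝐁 = ((q ^ 2) ^ n)⁻¹ • (𝐁 * 𝐀 ^ n) :=
  ((inv_smul_eq_iff₀ (by positivity)).mpr (mul_pow_of_mul_eq_smul B_mul_A n)).symm

theorem A_mul_Bs_pow (j : ℕ) : 𝐀 * 𝐁⋆ ^ j = (q ^ 2) ^ j • (𝐁⋆ ^ j * 𝐀) :=
  mul_pow_of_mul_eq_smul A_mul_Bs j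

theorem A_pow_mul_Bs (n : ℕ) : 𝐀 ^ n * 𝐁⋆ = (q ^ 2) ^ n • (𝐁⋆ * 𝐀 ^ n) :=
  pow_mul_of_mul_eq_smul A_mul_Bs n

theorem A_mul_B_pow_mul_A_pow (hq : q ≠ 0) (j n : ℕ) :
    𝐀 * (𝐁 ^ j * 𝐀 ^ n) = ((q ^ 2) ^ j)⁻¹ • (𝐁 ^ j * 𝐀 ^ (n + 1)) := by
  rw [← mul_assoc, A_mul_B_pow hq, smul_mul_assoc, mul_assoc, ← pow_succ']

theorem A_mul_Bs_pow_mul_A_pow (j n : ℕ) :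
    𝐀 * (𝐁⋆ ^ j * 𝐀 ^ n) = (q ^ 2) ^ j • (𝐁⋆ ^ j * 𝐀 ^ (n + 1)) := by
  rw [← mul_assoc, A_mul_Bs_pow, smul_mul_assoc, mul_assoc, ← pow_succ']

theorem B_mul_Bs_pow_succ_mul_A_pow (m n : ℕ) :
    𝐁 * (𝐁⋆ ^ (m + 1) * 𝐀 ^ n) = (c * d) • (𝐁⋆ ^ m * 𝐀 ^ n) +
      ((q ^ 2) ^ (m + 1) * (c - d)) • (𝐁⋆ ^ m * 𝐀 ^ (n + 1)) -
      ((q ^ 2) ^ (m + 1)) ^ 2 • (𝐁⋆ ^ m * 𝐀 ^ (n + 2)) := by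
  rw [pow_succ', mul_assoc, ← mul_assoc 𝐁, B_mul_Bs]
  simp only [sub_mul, add_mul, smul_mul_assoc, ← Algebra.smul_def, sq 𝐀, mul_assoc,
    A_mul_Bs_pow_mul_A_pow, mul_smul_comm, smul_smul]
  module

theorem Bs_mul_B_pow_succ_mul_A_pow (hq : q ≠ 0) (m n : ℕ) :
    𝐁⋆ * (𝐁 ^ (m + 1) * 𝐀 ^ n) = (c * d) • (𝐁 ^ m * 𝐀 ^ n) +
      (((q ^ 2) ^ m)⁻¹ * (c - d)) • (𝐁 ^ m * 𝐀 ^ (n + 1)) -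
      (((q ^ 2) ^ m)⁻¹) ^ 2 • (𝐁 ^ m * 𝐀 ^ (n + 2)) := by
  rw [pow_succ', mul_assoc, ← mul_assoc 𝐁⋆, Bs_mul_B]
  simp only [sub_mul, add_mul, smul_mul_assoc, ← Algebra.smul_def, sq 𝐀, mul_assoc,
    A_mul_B_pow_mul_A_pow hq, mul_smul_comm, smul_smul]
  module

theorem B_pow_mul_A_pow_mul_B (hq : q ≠ 0) (j n : ℕ) :
    𝐁 ^ j * 𝐀 ^ n * 𝐁 = ((q ^ 2) ^ n)⁻¹ • (𝐁 ^ (j + 1) * 𝐀 ^ n) := by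
  rw [mul_assoc, A_pow_mul_B hq, mul_smul_comm, ← mul_assoc, ← pow_succ]

theorem Bs_pow_mul_A_pow_mul_Bs (j n : ℕ) :
    𝐁⋆ ^ j * 𝐀 ^ n * 𝐁⋆ = (q ^ 2) ^ n • (𝐁⋆ ^ (j + 1) * 𝐀 ^ n) := by
  rw [mul_assoc, A_pow_mul_Bs, mul_smul_comm, ← mul_assoc, ← pow_succ]

theorem Bs_pow_succ_mul_A_pow_mul_B (hq : q ≠ 0) (m n : ℕ) :
    𝐁⋆ ^ (m + 1) * 𝐀 ^ n * 𝐁 = ((q ^ 2) ^ n)⁻¹ • ((c * d) • (𝐁⋆ ^ m * 𝐀 ^ n) +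
      (c - d) • (𝐁⋆ ^ m * 𝐀 ^ (n + 1)) - 𝐁⋆ ^ m * 𝐀 ^ (n + 2)) := by
  rw [mul_assoc, A_pow_mul_B hq, mul_smul_comm, ← mul_assoc, pow_succ 𝐁⋆, mul_assoc _ 𝐁⋆,
    Bs_mul_B]
  simp only [Algebra.algebraMap_eq_smul_one, sub_mul, add_mul, mul_sub, mul_add, smul_mul_assoc,
    mul_smul_comm, mul_one, mul_assoc, ← pow_succ', ← pow_add, add_comm 2 n]

theorem B_pow_succ_mul_A_pow_mul_Bs (m n : ℕ) :
    𝐁 ^ (m + 1) * 𝐀 ^ n * 𝐁⋆ = (q ^ 2) ^ n • ((c * d) • (𝐁 ^ m * 𝐀 ^ n) +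
      (q ^ 2 * (c - d)) • (𝐁 ^ m * 𝐀 ^ (n + 1)) - q ^ 4 • (𝐁 ^ m * 𝐀 ^ (n + 2))) := by
  rw [mul_assoc, A_pow_mul_Bs, mul_smul_comm, ← mul_assoc, pow_succ 𝐁,
    mul_assoc _ 𝐁, B_mul_Bs]
  simp only [Algebra.algebraMap_eq_smul_one, sub_mul, add_mul, mul_sub, mul_add, smul_mul_assoc,
    mul_smul_comm, mul_one, mul_assoc, ← pow_succ', ← pow_add, add_comm 2 n]

variable (k q c d) in
def pbwMonomials : Set (PodlesAlg k q c d) :=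
  {x | ∃ j n : ℕ, x = 𝐁 ^ j * 𝐀 ^ n} ∪ {x | ∃ j n : ℕ, x = 𝐁⋆ ^ j * 𝐀 ^ n}

theorem B_pow_mul_A_pow_mem_span (j n : ℕ) :
    𝐁 ^ j * 𝐀 ^ n ∈ Submodule.span k (pbwMonomials k q c d) :=
  Submodule.subset_span (Or.inl ⟨j, n, rfl⟩)

theorem Bs_pow_mul_A_pow_mem_span (j n : ℕ) :
    𝐁⋆ ^ j * 𝐀 ^ n ∈ Submodule.span k (pbwMonomials k q c d) :=
  Submodule.subset_span (Or.inr ⟨j, n, rfl⟩)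

theorem span_pbwMonomials (hq : q ≠ 0) : Submodule.span k (pbwMonomials k q c d) = ⊤ := by
  refine Submodule.span_eq_top_of_mul_mem adjoin_generators
    (by simpa using B_pow_mul_A_pow_mem_span 0 0) ?_
  have hB := B_pow_mul_A_pow_mem_span (q := q) (c := c) (d := d)
  have hBs := Bs_pow_mul_A_pow_mem_span (q := q) (c := c) (d := d)
  rintro x (rfl | rfl | rfl) y (⟨j, n, rfl⟩ | ⟨j, n, rfl⟩)
  · rw [A_mul_B_pow_mul_A_pow hq]
    exact Submodule.smul_mem _ _ (hB j _)
  · rw [A_mul_Bs_pow_mul_A_pow]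
    exact Submodule.smul_mem _ _ (hBs j _)
  · rw [← mul_assoc, ← pow_succ']
    exact hB _ n
  · cases j with
    | zero => simpa using hB 1 n
    | succ m =>
      rw [B_mul_Bs_pow_succ_mul_A_pow]
      exact sub_mem (add_mem (Submodule.smul_mem _ _ (hBs m n))
        (Submodule.smul_mem _ _ (hBs m _))) (Submodule.smul_mem _ _ (hBs m _))
  · cases j with
    | zero => simpa using hBs 1 n
    | succ m =>
      rw [Bs_mul_B_pow_succ_mul_A_pow hq]
      exact sub_mem (add_mem (Submodule.smul_mem _ _ (hB m n))
        (Submodule.smul_mem _ _ (hB m _))) (Submodule.smul_mem _ _ (hB m _))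
  · rw [← mul_assoc, ← pow_succ']
    exact hBs _ n

/-- The modular identity for `x = B`, `y = B⋆ Aⁿ`, with `B B⋆` and `B⋆ B` expanded as polynomials
in `A` and `μ n` standing for `h (Aⁿ)`. -/
def MomentRecurrence (q c d : k) (μ : ℕ → k) : Prop :=
  ∀ n, (q ^ 2) ^ (n + 1) * (c * d * μ n + q ^ 2 * (c - d) * μ (n + 1) - q ^ 4 * μ (n + 2)) =
    c * d * μ n + (c - d) * μ (n + 1) - μ (n + 2)

section Functional

variable (h : PodlesAlg k q c d →ₗ[k] k)

theorem map_A_mul (hq : q ≠ 0) (hB : ∀ m n : ℕ, h (𝐁 ^ (m + 1) * 𝐀 ^ n) = 0)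
    (hBs : ∀ m n : ℕ, h (𝐁⋆ ^ (m + 1) * 𝐀 ^ n) = 0) (y : PodlesAlg k q c d) :
    h (𝐀 * y) = h (y * 𝐀) := by
  rw [← one_smul k (h (y * 𝐀))]
  refine LinearMap.map_mul_eq_smul_of_span_eq_top (span_pbwMonomials hq) h _ _ _ ?_ y
  rintro y (⟨j, n, rfl⟩ | ⟨j, n, rfl⟩) <;> rw [one_smul, mul_assoc, ← pow_succ]
  · rw [A_mul_B_pow_mul_A_pow hq, map_smul]
    cases j <;> simp [hB]
  · rw [A_mul_Bs_pow_mul_A_pow, map_smul]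
    cases j <;> simp [hBs]

theorem map_B_mul (hq : q ≠ 0) (hB : ∀ m n : ℕ, h (𝐁 ^ (m + 1) * 𝐀 ^ n) = 0)
    (hBs : ∀ m n : ℕ, h (𝐁⋆ ^ (m + 1) * 𝐀 ^ n) = 0)
    (hrec : MomentRecurrence q c d fun n => h (𝐀 ^ n))
    (y : PodlesAlg k q c d) : h (𝐁 * y) = (q ^ 2)⁻¹ • h (y * 𝐁) := by
  refine LinearMap.map_mul_eq_smul_of_span_eq_top (span_pbwMonomials hq) h _ _ _ ?_ y
  have hB' (j n : ℕ) : h (𝐁 * (𝐁 ^ j * 𝐀 ^ n)) = (q ^ 2)⁻¹ • h (𝐁 ^ j * 𝐀 ^ n * 𝐁) := by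
    rw [← mul_assoc, ← pow_succ', B_pow_mul_A_pow_mul_B hq, map_smul, hB, smul_zero, smul_zero]
  rintro y (⟨j, n, rfl⟩ | ⟨_ | _ | m, n, rfl⟩)
  · exact hB' j n
  · simpa using hB' 0 n
  · rw [B_mul_Bs_pow_succ_mul_A_pow, Bs_pow_succ_mul_A_pow_mul_B hq]
    simp only [map_sub, map_add, map_smul, smul_eq_mul, pow_zero, one_mul]
    rw [← show _ = _ from hrec n]
    field_simp
    ring
  · rw [B_mul_Bs_pow_succ_mul_A_pow, Bs_pow_succ_mul_A_pow_mul_B hq]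
    simp [hBs]

theorem map_Bs_mul (hq : q ≠ 0) (hB : ∀ m n : ℕ, h (𝐁 ^ (m + 1) * 𝐀 ^ n) = 0)
    (hBs : ∀ m n : ℕ, h (𝐁⋆ ^ (m + 1) * 𝐀 ^ n) = 0)
    (hrec : MomentRecurrence q c d fun n => h (𝐀 ^ n))
    (y : PodlesAlg k q c d) : h (𝐁⋆ * y) = q ^ 2 • h (y * 𝐁⋆) := by
  refine LinearMap.map_mul_eq_smul_of_span_eq_top (span_pbwMonomials hq) h _ _ _ ?_ y
  have hBs' (j n : ℕ) : h (𝐁⋆ * (𝐁⋆ ^ j * 𝐀 ^ n)) = q ^ 2 • h (𝐁⋆ ^ j * 𝐀 ^ n * 𝐁⋆) := by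
    rw [← mul_assoc, ← pow_succ', Bs_pow_mul_A_pow_mul_Bs, map_smul, hBs, smul_zero, smul_zero]
  rintro y (⟨_ | _ | m, n, rfl⟩ | ⟨j, n, rfl⟩)
  · simpa using hBs' 0 n
  · rw [Bs_mul_B_pow_succ_mul_A_pow hq, B_pow_succ_mul_A_pow_mul_Bs]
    simp only [map_sub, map_add, map_smul, smul_eq_mul, pow_zero, one_mul, inv_one, one_pow]
    rw [← show _ = _ from hrec n]
    ring
  · rw [Bs_mul_B_pow_succ_mul_A_pow hq, B_pow_succ_mul_A_pow_mul_Bs]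
    simp [hB]
  · exact hBs' j n

end Functional

def nmMoment (q c d : k) (n : ℕ) : k :=
  ((q ^ (-2 : ℤ) - 1) / (q ^ (-2 : ℤ) - q ^ (2 * n))) * ((c ^ (n + 1) - (-d) ^ (n + 1)) / (c + d))

theorem nmMoment_eq (hq : q ≠ 0) (n : ℕ) : nmMoment q c d n =
    (1 - q ^ 2) / (1 - (q ^ 2) ^ (n + 1)) * ((c ^ (n + 1) - (-d) ^ (n + 1)) / (c + d)) := by
  rw [nmMoment, ← mul_div_mul_left _ (_ - q ^ (2 * n)) (pow_ne_zero 2 hq)]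
  congr 2 <;> field_simp
  ring

theorem momentRecurrence_nmMoment (hq : q ≠ 0) (hroot : ∀ n : ℕ, (q ^ 2) ^ (n + 1) ≠ 1) :
    MomentRecurrence q c d (nmMoment q c d) := by
  intro n
  have h0 := sub_ne_zero.2 (hroot n).symm
  have h1 := sub_ne_zero.2 (hroot (n + 1)).symm
  have h2 := sub_ne_zero.2 (hroot (n + 2)).symm
  simp only [nmMoment_eq hq]
  field_simp
  ring

end Podles

theorem noumi_mimachi_modular_general (q : ℝ) (hq0 : 0 < q) (hq1 : q < 1) (c d : ℂ)
    (h : PodlesAlg ℂ (q : ℂ) c d →ₗ[ℂ] ℂ)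
    (σ : PodlesAlg ℂ (q : ℂ) c d ≃ₐ[ℂ] PodlesAlg ℂ (q : ℂ) c d)
    (hσA : σ (pA ℂ (q : ℂ) c d) = pA ℂ (q : ℂ) c d)
    (hσB : σ (pB ℂ (q : ℂ) c d) = ((q : ℂ) ^ (-2 : ℤ)) • pB ℂ (q : ℂ) c d)
    (hσBs : σ (pBs ℂ (q : ℂ) c d) = ((q : ℂ) ^ 2) • pBs ℂ (q : ℂ) c d)
    (hhB : ∀ m n : ℕ, h ((pB ℂ (q : ℂ) c d) ^ (m + 1) * (pA ℂ (q : ℂ) c d) ^ n) = 0)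
    (hhBs : ∀ m n : ℕ, h ((pBs ℂ (q : ℂ) c d) ^ (m + 1) * (pA ℂ (q : ℂ) c d) ^ n) = 0)
    (hhA : ∀ n : ℕ, h ((pA ℂ (q : ℂ) c d) ^ n) =
      (((q : ℂ) ^ (-2 : ℤ) - 1) / ((q : ℂ) ^ (-2 : ℤ) - (q : ℂ) ^ (2 * n))) *
        ((c ^ (n + 1) - (-d) ^ (n + 1)) / (c + d))) :
    ∀ x y : PodlesAlg ℂ (q : ℂ) c d, h (x * y) = h (y * σ x) := by
  have hq : (q : ℂ) ≠ 0 := by exact_mod_cast hq0.ne'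
  have hroot (n : ℕ) : ((q : ℂ) ^ 2) ^ (n + 1) ≠ 1 := by
    norm_cast
    exact (pow_lt_one₀ (by positivity) (by nlinarith) n.succ_ne_zero).ne
  have hmoments : (fun n => h (pA ℂ q c d ^ n)) = Podles.nmMoment (q : ℂ) c d := funext hhA
  have hrec := hmoments ▸ Podles.momentRecurrence_nmMoment hq hroot
  refine LinearMap.map_mul_eq_map_mul_of_adjoin_eq_top Podles.adjoin_generators h σ ?_
  rintro x (rfl | rfl | rfl) y
  · rw [hσA, Podles.map_A_mul h hq hhB hhBs]
  · rw [hσB, mul_smul_comm, map_smul, zpow_neg, zpow_ofNat,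
      Podles.map_B_mul h hq hhB hhBs hrec]
  · rw [hσBs, mul_smul_comm, map_smul, Podles.map_Bs_mul h hq hhB hhBs hrec]

/-- The Noumi–Mimachi functional `h` on `A(c,d)`, defined on the PBW basis by
`h(B^{m+1}Aⁿ) = 0 = h((B*)^{m+1}Aⁿ)` and `h(Aⁿ) = (f(0)/f(n))·(c^{n+1} − (−d)^{n+1})/(c+d)`
with `f(n) = q⁻² − q^{2n}`, satisfies the modular property `h(xy) = h(y σ_mod(x))`, where
`σ_mod(A) = A`, `σ_mod(B) = q⁻²B`, `σ_mod(B*) = q²B*`. -/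
theorem noumi_mimachi_modular (q : ℝ) (hq0 : 0 < q) (hq1 : q < 1) (c d : ℂ)
    (hcd : c + d ≠ 0)
    (h : PodlesAlg ℂ (q : ℂ) c d →ₗ[ℂ] ℂ)
    (σ : PodlesAlg ℂ (q : ℂ) c d ≃ₐ[ℂ] PodlesAlg ℂ (q : ℂ) c d)
    (hσA : σ (pA ℂ (q : ℂ) c d) = pA ℂ (q : ℂ) c d)
    (hσB : σ (pB ℂ (q : ℂ) c d) = ((q : ℂ) ^ (-2 : ℤ)) • pB ℂ (q : ℂ) c d)
    (hσBs : σ (pBs ℂ (q : ℂ) c d) = ((q : ℂ) ^ 2) • pBs ℂ (q : ℂ) c d)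
    (hhB : ∀ m n : ℕ, h ((pB ℂ (q : ℂ) c d) ^ (m + 1) * (pA ℂ (q : ℂ) c d) ^ n) = 0)
    (hhBs : ∀ m n : ℕ, h ((pBs ℂ (q : ℂ) c d) ^ (m + 1) * (pA ℂ (q : ℂ) c d) ^ n) = 0)
    (hhA : ∀ n : ℕ, h ((pA ℂ (q : ℂ) c d) ^ n) =
      (((q : ℂ) ^ (-2 : ℤ) - 1) / ((q : ℂ) ^ (-2 : ℤ) - (q : ℂ) ^ (2 * n))) *
        ((c ^ (n + 1) - (-d) ^ (n + 1)) / (c + d))) :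
    ∀ x y : PodlesAlg ℂ (q : ℂ) c d, h (x * y) = h (y * σ x) :=
  noumi_mimachi_modular_general q hq0 hq1 c d h σ hσA hσB hσBs hhB hhBs hhA
end

section
/- In HH_0^σ(A) = A/[A,A]_σ for A = A(c,d) and σ = σ_λ (σ(A)=A, σ(B)=λB, σ(B*)=λ^{-1}B*), the classes x_n := (λ^{-1} − q^{2n})[A^n] satisfy the recurrence x_{n+2} + (d−c)x_{n+1} − cd·x_n = 0 for all n ≥ 0. -/
/-!
The twisted commutator `Aⁿ B* · B − σ(B) · Aⁿ B*` vanishes in `HH₀^σ`. Moving `B` past `Aⁿ`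
costs `q^{2n}` and both `B*B` and `BB*` are quadratic polynomials in `A`, so this twisted
commutator is a combination of `Aⁿ, Aⁿ⁺¹, Aⁿ⁺²`; multiplied by `-λ⁻¹` it is the recurrence.
-/

namespace Podles

variable {k : Type} [Field k] {q c d : k}

theorem pB_mul_pA : pB k q c d * pA k q c d = q ^ 2 • (pA k q c d * pB k q c d) := by
  simpa [pA, pB] using RingQuot.mkAlgHom_rel k (PodlesRel.BA (q := q) (c := c) (d := d))

theorem pBs_mul_pB : pBs k q c d * pB k q c d =
    algebraMap k _ (c * d) + (c - d) • pA k q c d - pA k q c d ^ 2 := by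
  simpa [pA, pB, pBs] using RingQuot.mkAlgHom_rel k (PodlesRel.BsB (q := q) (c := c) (d := d))

theorem pB_mul_pBs : pB k q c d * pBs k q c d =
    algebraMap k _ (c * d) + (q ^ 2 * (c - d)) • pA k q c d - q ^ 4 • pA k q c d ^ 2 := by
  simpa [pA, pB, pBs] using RingQuot.mkAlgHom_rel k (PodlesRel.BBs (q := q) (c := c) (d := d))

theorem pB_mul_pA_pow (m : ℕ) :
    pB k q c d * pA k q c d ^ m = q ^ (2 * m) • (pA k q c d ^ m * pB k q c d) := by
  induction m with
  | zero => simp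
  | succ m ih =>
    rw [pow_succ, ← mul_assoc, ih, smul_mul_assoc, mul_assoc, pB_mul_pA, mul_smul_comm,
      smul_smul, ← mul_assoc]
    ring_nf

theorem pA_pow_mul_pBs_mul_pB_sub_smul_pB_mul (l : k) (n : ℕ) :
    pA k q c d ^ n * pBs k q c d * pB k q c d - l • pB k q c d * (pA k q c d ^ n * pBs k q c d) =
      ((1 - l * q ^ (2 * n)) * (c * d)) • pA k q c d ^ n +
        ((1 - l * q ^ (2 * n + 2)) * (c - d)) • pA k q c d ^ (n + 1) -
        (1 - l * q ^ (2 * n + 4)) • pA k q c d ^ (n + 2) := by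
  rw [mul_assoc, pBs_mul_pB, smul_mul_assoc, ← mul_assoc, pB_mul_pA_pow, smul_mul_assoc,
    mul_assoc, pB_mul_pBs]
  simp only [Algebra.algebraMap_eq_smul_one, mul_add, mul_sub, mul_smul_comm, mul_one,
    smul_smul, pow_succ, pow_zero, one_mul, mul_assoc]
  module

end Podles

theorem podles_HH0_recurrence_general (k : Type) [Field k] (q c d : k)
    (l : k) (hl : l ≠ 0)
    (σ : PodlesAlg k q c d ≃ₐ[k] PodlesAlg k q c d)
    (hσB : σ (pB k q c d) = l • pB k q c d)
    (N : Submodule k (PodlesAlg k q c d))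
    (hN : N = Submodule.span k {x : PodlesAlg k q c d | ∃ a b, x = a * b - σ b * a}) :
    ∀ n : ℕ,
      (l⁻¹ - q ^ (2 * (n + 2))) • N.mkQ ((pA k q c d) ^ (n + 2)) +
        (d - c) • ((l⁻¹ - q ^ (2 * (n + 1))) • N.mkQ ((pA k q c d) ^ (n + 1))) -
        (c * d) • ((l⁻¹ - q ^ (2 * n)) • N.mkQ ((pA k q c d) ^ n)) = 0 := by
  intro n
  set A := pA k q c d
  have hcomm : N.mkQ (A ^ n * pBs k q c d * pB k q c d - σ (pB k q c d) * (A ^ n * pBs k q c d))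
      = 0 := by
    rw [Submodule.mkQ_apply, Submodule.Quotient.mk_eq_zero, hN]
    exact Submodule.subset_span ⟨_, _, rfl⟩
  rw [hσB, Podles.pA_pow_mul_pBs_mul_pB_sub_smul_pB_mul] at hcomm
  simp only [map_sub, map_add, map_smul] at hcomm
  calc _ = (-l⁻¹) • (((1 - l * q ^ (2 * n)) * (c * d)) • N.mkQ (A ^ n)
          + ((1 - l * q ^ (2 * n + 2)) * (c - d)) • N.mkQ (A ^ (n + 1))
          - (1 - l * q ^ (2 * n + 4)) • N.mkQ (A ^ (n + 2))) := by
        match_scalars <;> field_simp <;> ring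
    _ = 0 := by rw [hcomm, smul_zero]

/-- In `HH₀^σ(A) = A/[A,A]_σ` for `A = A(c,d)` and `σ = σ_λ`, the classes
`x_n := (λ⁻¹ − q^{2n})[Aⁿ]` satisfy `x_{n+2} + (d−c)x_{n+1} − cd·x_n = 0` for all `n ≥ 0`. -/
theorem podles_HH0_recurrence (k : Type) [Field k] [CharZero k] (q c d : k)
    (hq0 : q ≠ 0) (hq : ∀ n : ℕ, 0 < n → q ^ n ≠ 1) (hcd : c + d ≠ 0)
    (l : k) (hl : l ≠ 0)
    (σ : PodlesAlg k q c d ≃ₐ[k] PodlesAlg k q c d)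
    (hσA : σ (pA k q c d) = pA k q c d)
    (hσB : σ (pB k q c d) = l • pB k q c d)
    (hσBs : σ (pBs k q c d) = l⁻¹ • pBs k q c d)
    (N : Submodule k (PodlesAlg k q c d))
    (hN : N = Submodule.span k {x : PodlesAlg k q c d | ∃ a b, x = a * b - σ b * a}) :
    ∀ n : ℕ,
      (l⁻¹ - q ^ (2 * (n + 2))) • N.mkQ ((pA k q c d) ^ (n + 2)) +
        (d - c) • ((l⁻¹ - q ^ (2 * (n + 1))) • N.mkQ ((pA k q c d) ^ (n + 1))) -
        (c * d) • ((l⁻¹ - q ^ (2 * n)) • N.mkQ ((pA k q c d) ^ n)) = 0 :=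
  podles_HH0_recurrence_general k q c d l hl σ hσB N hN
end

section
/- For A = A(c,c) and the automorphism τ_λ (τ(A) = −A, τ(B) = λB, τ(B*) = λ^{-1}B*), the class [A^{n+1}] vanishes in HH_0^{τ_λ}(A) for every n ≥ 0; in particular if λ ≠ 1 then HH_0^{τ_λ}(A) is spanned by [1]. -/
/-!
In `HH₀^τ` one has `[x a] = [τ(a) x]`. Hence if `τ a = t • a` and `x a = s • a x` with `s ≠ t`,
the class `[a x]` vanishes. Taking `a = A` (`t = -1`) and `x = A^n` (`s = 1`) kills `A^{n+1}`;
taking `x = A^i B^j` (`s = q^{2j} ≠ -1`) kills `A^{i+1} B^j`; taking `a = B`, `x = B^j`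
(`s = 1`, `t = λ ≠ 1`) kills `B^{j+1}`, and likewise for `B*`. The relations let every generator
be moved to the right of a monomial `A^i B^j` or `A^i B*^j`, so these monomials span `A(c,c)`
and everything but `[1]` vanishes.
-/

open Submodule

theorem pow_mul_eq_smul_mul_pow {k R : Type*} [CommSemiring k] [Semiring R] [Algebra k R]
    {x y : R} {s : k} (h : y * x = s • (x * y)) (j : ℕ) : y ^ j * x = s ^ j • (x * y ^ j) := by
  induction j with
  | zero => simp
  | succ j ih =>
    rw [pow_succ, mul_assoc, h, mul_smul_comm, ← mul_assoc, ih, smul_mul_assoc, smul_smul,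
      mul_assoc, ← pow_succ, ← pow_succ']

theorem sq_pow_ne_neg_one {k : Type*} [Ring k] (h1 : (1 : k) ≠ -1) {q : k}
    (hq : ∀ n : ℕ, 0 < n → q ^ n ≠ 1) (j : ℕ) : (q ^ 2) ^ j ≠ -1 := by
  intro h
  rcases j.eq_zero_or_pos with rfl | hj
  · exact h1 (by rwa [pow_zero] at h)
  · refine hq (4 * j) (by omega) ?_
    rw [show 4 * j = 2 * j + 2 * j by ring, pow_add, pow_mul, h]
    norm_num

theorem Submodule.mul_right_mem_span {k R : Type*} [CommSemiring k] [Semiring R]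
    [Algebra k R] {S : Set R} {x : R} (y : R) (hS : ∀ g ∈ S, g * y ∈ span k S)
    (hx : x ∈ span k S) : x * y ∈ span k S :=
  (span_le (p := (span k S).comap (LinearMap.mulRight k y)).mpr hS) hx

theorem Submodule.mul_left_mem_span {k R : Type*} [CommSemiring k] [Semiring R]
    [Algebra k R] {S : Set R} {x : R} (y : R) (hS : ∀ g ∈ S, y * g ∈ span k S)
    (hx : x ∈ span k S) : y * x ∈ span k S :=
  (span_le (p := (span k S).comap (LinearMap.mulLeft k y)).mpr hS) hx

theorem Submodule.eq_top_of_one_mem_of_mul_mem {k R : Type*} [CommSemiring k] [Semiring R]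
    [Algebra k R] {S : Set R} (hS : Algebra.adjoin k S = ⊤) {M : Submodule k R} (h1 : 1 ∈ M)
    (hM : ∀ x ∈ M, ∀ g ∈ S, x * g ∈ M) : M = ⊤ := by
  refine eq_top_iff'.mpr fun y => ?_
  have hy : ∀ x ∈ M, x * y ∈ M := by
    induction (hS ▸ Algebra.mem_top : y ∈ Algebra.adjoin k S) using Algebra.adjoin_induction with
    | mem g hg => exact fun x hx => hM x hx g hg
    | algebraMap r =>
      exact fun x hx => by rw [← Algebra.commutes, ← Algebra.smul_def]; exact M.smul_mem r hx
    | add y z _ _ hy hz => exact fun x hx => by rw [mul_add]; exact add_mem (hy x hx) (hz x hx)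
    | mul y z _ _ hy hz => exact fun x hx => by rw [← mul_assoc]; exact hz _ (hy x hx)
  simpa using hy 1 h1

section TwistedCommutators

variable {k R : Type*} [Field k] [Ring R] [Algebra k R]

def twistedCommutators (τ : R →ₐ[k] R) : Submodule k R :=
  span k {x | ∃ a b, x = a * b - τ b * a}

namespace twistedCommutators

variable {τ : R →ₐ[k] R}

theorem mkQ_mul_comm (a b : R) :
    (twistedCommutators τ).mkQ (a * b) = (twistedCommutators τ).mkQ (τ b * a) := by
  rw [mkQ_apply, mkQ_apply, Submodule.Quotient.eq]
  exact subset_span ⟨a, b, rfl⟩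

theorem mkQ_mul_eq_zero {a x : R} {s t : k} (hτ : τ a = t • a) (hxa : x * a = s • (a * x))
    (hst : s ≠ t) : (twistedCommutators τ).mkQ (a * x) = 0 := by
  have h := mkQ_mul_comm (τ := τ) x a
  rw [hxa, hτ, smul_mul_assoc, map_smul, map_smul, ← sub_eq_zero, ← sub_smul] at h
  exact (smul_eq_zero.mp h).resolve_left (sub_ne_zero.mpr hst)

theorem mkQ_pow_succ_eq_zero {a : R} (hτ : τ a = -a) (h : (1 : k) ≠ -1) (n : ℕ) :
    (twistedCommutators τ).mkQ (a ^ (n + 1)) = 0 := by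
  rw [pow_succ']
  exact mkQ_mul_eq_zero (by rw [hτ, neg_one_smul]) (by rw [one_smul, ← pow_succ, ← pow_succ']) h

end twistedCommutators

end TwistedCommutators

section SkewMonomials

variable (k : Type*) {R : Type*} [CommSemiring k] [Semiring R] [Algebra k R]

def skewMonomials (a b b' : R) : Submodule k R :=
  span k (Set.range (fun p : ℕ × ℕ => a ^ p.1 * b ^ p.2) ∪
    Set.range (fun p : ℕ × ℕ => a ^ p.1 * b' ^ p.2))

variable {k} {a b b' : R} {s s' : k}

theorem skewMonomials_comm : skewMonomials k a b b' = skewMonomials k a b' b := by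
  rw [skewMonomials, skewMonomials, Set.union_comm]

theorem pow_mul_pow_mem_skewMonomials (i j : ℕ) : a ^ i * b ^ j ∈ skewMonomials k a b b' :=
  subset_span (Or.inl ⟨(i, j), rfl⟩)

theorem pow_mem_skewMonomials (j : ℕ) : b ^ j ∈ skewMonomials k a b b' := by
  simpa using pow_mul_pow_mem_skewMonomials (k := k) (a := a) (b' := b') 0 j

theorem pow_mul_mem_skewMonomials {x : R} (hx : x ∈ skewMonomials k a b b') (i : ℕ) :
    a ^ i * x ∈ skewMonomials k a b b' := by
  refine mul_left_mem_span _ ?_ hx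
  rintro _ (⟨⟨i', j⟩, rfl⟩ | ⟨⟨i', j⟩, rfl⟩) <;> rw [← mul_assoc, ← pow_add]
  exacts [subset_span (Or.inl ⟨(i + i', j), rfl⟩), subset_span (Or.inr ⟨(i + i', j), rfl⟩)]

theorem mul_mem_skewMonomials_of_forall_pow_mul_mem {x : R} (y : R)
    (hb : ∀ j : ℕ, b ^ j * y ∈ skewMonomials k a b b')
    (hb' : ∀ j : ℕ, b' ^ j * y ∈ skewMonomials k a b b') (hx : x ∈ skewMonomials k a b b') :
    x * y ∈ skewMonomials k a b b' := by
  refine mul_right_mem_span _ ?_ hx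
  rintro _ (⟨⟨i, j⟩, rfl⟩ | ⟨⟨i, j⟩, rfl⟩) <;> rw [mul_assoc]
  exacts [pow_mul_mem_skewMonomials (hb j) i, pow_mul_mem_skewMonomials (hb' j) i]

theorem mul_mem_skewMonomials_of_mul_eq_smul (hba : b * a = s • (a * b))
    (hb'a : b' * a = s' • (a * b')) {x : R} (hx : x ∈ skewMonomials k a b b') :
    x * a ∈ skewMonomials k a b b' := by
  refine mul_mem_skewMonomials_of_forall_pow_mul_mem _ (fun j => ?_) (fun j => ?_) hx
  · rw [pow_mul_eq_smul_mul_pow hba]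
    exact smul_mem _ _ (by simpa using pow_mul_pow_mem_skewMonomials (k := k) (b' := b') 1 j)
  · rw [pow_mul_eq_smul_mul_pow hb'a, skewMonomials_comm]
    exact smul_mem _ _ (by simpa using pow_mul_pow_mem_skewMonomials (k := k) (b' := b) 1 j)

theorem pow_mul_mem_skewMonomials_of_mul_mem_span (hba : b * a = s • (a * b))
    (hb'a : b' * a = s' • (a * b')) (hbb' : b * b' ∈ span k {1, a ^ 2}) (j : ℕ) :
    b ^ j * b' ∈ skewMonomials k a b b' := by
  cases j with
  | zero =>
    rw [pow_zero, one_mul, skewMonomials_comm]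
    simpa using pow_mem_skewMonomials (k := k) (a := a) (b' := b) 1
  | succ j =>
    rw [pow_succ, mul_assoc]
    refine (span_le (p := (skewMonomials k a b b').comap (LinearMap.mulLeft k (b ^ j)))).mpr
      ?_ hbb'
    rintro _ (rfl | rfl)
    · simpa using pow_mem_skewMonomials j
    · simp only [SetLike.mem_coe, mem_comap, LinearMap.mulLeft_apply, sq, ← mul_assoc]
      exact mul_mem_skewMonomials_of_mul_eq_smul hba hb'a
        (mul_mem_skewMonomials_of_mul_eq_smul hba hb'a (pow_mem_skewMonomials j))

theorem skewMonomials_eq_top (hgen : Algebra.adjoin k {a, b, b'} = ⊤)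
    (hba : b * a = s • (a * b)) (hb'a : b' * a = s' • (a * b'))
    (hbb' : b * b' ∈ span k {1, a ^ 2}) (hb'b : b' * b ∈ span k {1, a ^ 2}) :
    skewMonomials k a b b' = ⊤ := by
  refine eq_top_of_one_mem_of_mul_mem hgen (by simpa using pow_mem_skewMonomials 0) ?_
  rintro x hx _ (rfl | rfl | rfl)
  · exact mul_mem_skewMonomials_of_mul_eq_smul hba hb'a hx
  · refine mul_mem_skewMonomials_of_forall_pow_mul_mem _ (fun j => ?_) (fun j => ?_) hx
    · rw [← pow_succ]; exact pow_mem_skewMonomials _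
    · rw [skewMonomials_comm]; exact pow_mul_mem_skewMonomials_of_mul_mem_span hb'a hba hb'b j
  · refine mul_mem_skewMonomials_of_forall_pow_mul_mem _ (fun j => ?_) (fun j => ?_) hx
    · exact pow_mul_mem_skewMonomials_of_mul_mem_span hba hb'a hbb' j
    · rw [← pow_succ, skewMonomials_comm]; exact pow_mem_skewMonomials _

end SkewMonomials

namespace twistedCommutators

variable {k R : Type*} [Field k] [Ring R] [Algebra k R] {τ : R →ₐ[k] R} {a b b' : R}
  {s s' t t' : k}

theorem mkQ_pow_mul_pow_mem_span_one (hτa : τ a = -a) (hτb : τ b = t • b)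
    (hba : b * a = s • (a * b)) (hs : ∀ j : ℕ, s ^ j ≠ -1) (ht : t ≠ 1) (i j : ℕ) :
    (twistedCommutators τ).mkQ (a ^ i * b ^ j) ∈ span k {(twistedCommutators τ).mkQ 1} := by
  rcases i with _ | i
  · rcases j with _ | j
    · simp
    · rw [pow_zero, one_mul, pow_succ',
        mkQ_mul_eq_zero hτb (s := 1) (by rw [one_smul, ← pow_succ, ← pow_succ']) ht.symm]
      exact zero_mem _
  · have hxa : a ^ i * b ^ j * a = s ^ j • (a * (a ^ i * b ^ j)) := by
      rw [mul_assoc, pow_mul_eq_smul_mul_pow hba, mul_smul_comm, ← mul_assoc, ← mul_assoc,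
        ← pow_succ, ← pow_succ']
    rw [pow_succ', mul_assoc, mkQ_mul_eq_zero (by rw [hτa, neg_one_smul]) hxa (hs j)]
    exact zero_mem _

theorem span_mkQ_one_eq_top (htop : skewMonomials k a b b' = ⊤) (hτa : τ a = -a)
    (hτb : τ b = t • b) (hτb' : τ b' = t' • b') (hba : b * a = s • (a * b))
    (hb'a : b' * a = s' • (a * b')) (hs : ∀ j : ℕ, s ^ j ≠ -1) (hs' : ∀ j : ℕ, s' ^ j ≠ -1)
    (ht : t ≠ 1) (ht' : t' ≠ 1) : span k {(twistedCommutators τ).mkQ 1} = ⊤ := by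
  rw [eq_top_iff, ← range_mkQ, ← Submodule.map_top, ← htop, skewMonomials, map_span, span_le]
  rintro _ ⟨_, ⟨⟨i, j⟩, rfl⟩ | ⟨⟨i, j⟩, rfl⟩, rfl⟩
  exacts [mkQ_pow_mul_pow_mem_span_one hτa hτb hba hs ht i j,
    mkQ_pow_mul_pow_mem_span_one hτa hτb' hb'a hs' ht' i j]

end twistedCommutators

section Podles

variable {k : Type} [Field k] {q c d : k}

theorem pB_mul_pA : pB k q c d * pA k q c d = q ^ 2 • (pA k q c d * pB k q c d) := by
  simpa [pA, pB] using RingQuot.mkAlgHom_rel k (PodlesRel.BA (q := q) (c := c) (d := d))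

theorem pBs_mul_pA (hq0 : q ≠ 0) :
    pBs k q c d * pA k q c d = q⁻¹ ^ 2 • (pA k q c d * pBs k q c d) := by
  have h := RingQuot.mkAlgHom_rel k (PodlesRel.ABs (q := q) (c := c) (d := d))
  simp only [map_mul, map_smul] at h
  rw [pA, pBs, h, smul_smul, inv_pow, inv_mul_cancel₀ (pow_ne_zero 2 hq0), one_smul]

theorem pB_mul_pBs_mem_span : pB k q c c * pBs k q c c ∈ span k {1, pA k q c c ^ 2} := by
  rw [pB, pBs, ← map_mul, RingQuot.mkAlgHom_rel k PodlesRel.BBs]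
  simp only [map_sub, map_smul, map_pow, map_one, sub_self, mul_zero, zero_smul,
    add_zero, Algebra.algebraMap_eq_smul_one]
  exact sub_mem (smul_mem _ _ (subset_span (Set.mem_insert _ _)))
    (smul_mem _ _ (subset_span (Set.mem_insert_of_mem _ rfl)))

theorem pBs_mul_pB_mem_span : pBs k q c c * pB k q c c ∈ span k {1, pA k q c c ^ 2} := by
  rw [pB, pBs, ← map_mul, RingQuot.mkAlgHom_rel k PodlesRel.BsB]
  simp only [map_sub, map_smul, map_pow, map_one, sub_self, zero_smul,
    add_zero, Algebra.algebraMap_eq_smul_one]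
  exact sub_mem (smul_mem _ _ (subset_span (Set.mem_insert _ _)))
    (subset_span (Set.mem_insert_of_mem _ rfl))

theorem adjoin_pA_pB_pBs :
    Algebra.adjoin k {pA k q c d, pB k q c d, pBs k q c d} = ⊤ := by
  have h : {pA k q c d, pB k q c d, pBs k q c d} =
      RingQuot.mkAlgHom k (PodlesRel k q c d) '' Set.range (FreeAlgebra.ι k) := by
    rw [← Set.range_comp]
    ext x
    simp [Fin.exists_fin_succ, pA, pB, pBs, eq_comm]
  rw [h, Algebra.adjoin_image, FreeAlgebra.adjoin_range_ι, Algebra.map_top,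
    AlgHom.range_eq_top]
  exact RingQuot.mkAlgHom_surjective k _

theorem skewMonomials_pA_pB_pBs_eq_top (hq0 : q ≠ 0) :
    skewMonomials k (pA k q c c) (pB k q c c) (pBs k q c c) = ⊤ :=
  skewMonomials_eq_top adjoin_pA_pB_pBs pB_mul_pA (pBs_mul_pA hq0) pB_mul_pBs_mem_span
    pBs_mul_pB_mem_span

end Podles

theorem podles_tau_HH0_general (k : Type) [Field k] [CharZero k] (q c : k)
    (hq0 : q ≠ 0) (hq : ∀ n : ℕ, 0 < n → q ^ n ≠ 1)
    (l : k)
    (τ : PodlesAlg k q c c ≃ₐ[k] PodlesAlg k q c c)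
    (hτA : τ (pA k q c c) = - pA k q c c)
    (hτB : τ (pB k q c c) = l • pB k q c c)
    (hτBs : τ (pBs k q c c) = l⁻¹ • pBs k q c c)
    (N : Submodule k (PodlesAlg k q c c))
    (hN : N = Submodule.span k {x : PodlesAlg k q c c | ∃ a b, x = a * b - τ b * a}) :
    (∀ n : ℕ, N.mkQ ((pA k q c c) ^ (n + 1)) = 0) ∧
    (l ≠ 1 → Submodule.span k {N.mkQ 1} = ⊤) := by
  obtain rfl : N = twistedCommutators (τ : PodlesAlg k q c c →ₐ[k] PodlesAlg k q c c) := hN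
  have h1 : (1 : k) ≠ -1 := by norm_num
  have hq' : ∀ n : ℕ, 0 < n → q⁻¹ ^ n ≠ 1 := fun n hn => by
    rw [inv_pow, inv_ne_one]
    exact hq n hn
  refine ⟨twistedCommutators.mkQ_pow_succ_eq_zero hτA h1, fun hl => ?_⟩
  exact twistedCommutators.span_mkQ_one_eq_top (skewMonomials_pA_pB_pBs_eq_top hq0) hτA hτB hτBs
    pB_mul_pA (pBs_mul_pA hq0) (sq_pow_ne_neg_one h1 hq) (sq_pow_ne_neg_one h1 hq') hl
    (inv_ne_one.mpr hl)

/-- For `A = A(c,c)` and the automorphism `τ_λ` (`τ(A) = −A`, `τ(B) = λB`, `τ(B*) = λ⁻¹B*`),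
the class `[A^{n+1}]` vanishes in `HH₀^{τ_λ}(A)` for every `n ≥ 0`; in particular if `λ ≠ 1`
then `HH₀^{τ_λ}(A)` is spanned by `[1]`. -/
theorem podles_tau_HH0 (k : Type) [Field k] [CharZero k] (q c : k)
    (hq0 : q ≠ 0) (hq : ∀ n : ℕ, 0 < n → q ^ n ≠ 1) (hc : (2 : k) * c ≠ 0)
    (l : k) (hl0 : l ≠ 0)
    (τ : PodlesAlg k q c c ≃ₐ[k] PodlesAlg k q c c)
    (hτA : τ (pA k q c c) = - pA k q c c)
    (hτB : τ (pB k q c c) = l • pB k q c c)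
    (hτBs : τ (pBs k q c c) = l⁻¹ • pBs k q c c)
    (N : Submodule k (PodlesAlg k q c c))
    (hN : N = Submodule.span k {x : PodlesAlg k q c c | ∃ a b, x = a * b - τ b * a}) :
    (∀ n : ℕ, N.mkQ ((pA k q c c) ^ (n + 1)) = 0) ∧
    (l ≠ 1 → Submodule.span k {N.mkQ 1} = ⊤) :=
  podles_tau_HH0_general k q c hq0 hq l τ hτA hτB hτBs N hN
end

section
/- The twisted Hochschild 2-chain ω_2 = 2[A^{b+1} ⊗ B ⊗ B* − A^{b+1} ⊗ B* ⊗ B + 2 A^b B ⊗ B* ⊗ A − 2q^{-2} A^b B ⊗ A ⊗ B*] + 2(q^4 − 1) A^{b+1} ⊗ A ⊗ A + (1 − q^{-2})cd(c−d) A^b ⊗ 1 ⊗ 1 + (c−d)[A^b ⊗ B* ⊗ B − q^{-2} A^b ⊗ B ⊗ B* + (1−q^2) A^b ⊗ A ⊗ A] satisfies b_σ(ω_2) = 0 in A(c,d)^{⊗2}, where σ = σ_λ with λ = q^{-(2b+2)}. -/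
/-! Direct computation. Each `b_σ` of a summand of `ω₂` is rewritten, using only the relations of
`A(c,d)` and the action of `σ_λ`, as a combination of `Aᵐ ⊗ 1`, `Aᵐ ⊗ A`, `Aᵐ ⊗ A²`, `AᵐB ⊗ B*`,
`B*Aᵐ ⊗ B` and `AᵐB ⊗ B*A` with coefficients rational in `q` and `λ`. These coefficients cancel
for `λ = q^{-(2b+2)}`, the twist for which `σ_λ(B)A^{b+1} = A^{b+1}B` and
`σ_λ(B*)A^{b+1} = A^{b+1}B*`. -/

open scoped TensorProduct

/-- The twisted Hochschild boundary `b_σ` on an elementary tensor `x ⊗ y ⊗ z`. -/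
noncomputable def bt (k R : Type) [Field k] [Ring R] [Algebra k R] (σ : R ≃ₐ[k] R) (x y z : R) :
    R ⊗[k] R :=
  ((x * y) ⊗ₜ[k] z) - (x ⊗ₜ[k] (y * z)) + ((σ z * x) ⊗ₜ[k] y)

open TensorProduct

section Commutation

variable {S R : Type*} [CommSemiring S] [Semiring R] [Algebra S R] {a x : R} {r : S}

theorem mul_pow_eq_smul_pow_mul_of_mul_eq_smul (h : x * a = r • (a * x)) (n : ℕ) :
    x * a ^ n = r ^ n • (a ^ n * x) := by
  induction n with
  | zero => simp
  | succ n ih =>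
    rw [pow_succ, ← mul_assoc, ih, smul_mul_assoc, mul_assoc, h, mul_smul_comm, smul_smul,
      ← mul_assoc, ← pow_succ, pow_succ']

theorem pow_mul_eq_smul_mul_pow_of_mul_eq_smul (h : a * x = r • (x * a)) (n : ℕ) :
    a ^ n * x = r ^ n • (x * a ^ n) := by
  induction n with
  | zero => simp
  | succ n ih =>
    rw [pow_succ, mul_assoc, h, mul_smul_comm, ← mul_assoc, ih, smul_mul_assoc, smul_smul,
      mul_assoc, ← pow_succ', pow_succ]

end Commutation

variable {k R : Type} [Field k] [Ring R] [Algebra k R]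

theorem bt_one_one (σ : R ≃ₐ[k] R) (x : R) : bt k R σ x 1 1 = x ⊗ₜ[k] 1 := by
  simp only [bt, map_one, mul_one, one_mul, sub_self, zero_add]

theorem bt_pow_self_self {σ : R ≃ₐ[k] R} {A : R} (hσA : σ A = A) (n : ℕ) :
    bt k R σ (A ^ n) A A = (2 : k) • ((A ^ (n + 1)) ⊗ₜ[k] A) - (A ^ n) ⊗ₜ[k] (A ^ 2) := by
  simp only [bt, hσA, ← pow_succ, ← pow_succ', ← pow_two, two_smul]
  abel

/-- The defining relations of `A(c,d)`, with `Bs` for `B*`. -/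
structure ACDRelations (q c d : k) (A B Bs : R) : Prop where
  B_mul_A : B * A = (q ^ 2) • (A * B)
  A_mul_Bs : A * Bs = (q ^ 2) • (Bs * A)
  Bs_mul_B : Bs * B = algebraMap k R (c * d) + (c - d) • A - A ^ 2
  B_mul_Bs : B * Bs = algebraMap k R (c * d) + (q ^ 2 * (c - d)) • A - (q ^ 4) • A ^ 2

/-- `σ` acts as `σ_λ`, with `l` for `λ`. -/
structure IsSigmaLambda (σ : R ≃ₐ[k] R) (l : k) (A B Bs : R) : Prop where
  map_A : σ A = A
  map_B : σ B = l • B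
  map_Bs : σ Bs = l⁻¹ • Bs

namespace ACDRelations

variable {q c d l : k} {A B Bs : R} {σ : R ≃ₐ[k] R}

theorem B_mul_pow (h : ACDRelations q c d A B Bs) (n : ℕ) :
    B * A ^ n = (q ^ 2) ^ n • (A ^ n * B) :=
  mul_pow_eq_smul_pow_mul_of_mul_eq_smul h.B_mul_A n

theorem pow_mul_Bs (h : ACDRelations q c d A B Bs) (n : ℕ) :
    A ^ n * Bs = (q ^ 2) ^ n • (Bs * A ^ n) :=
  pow_mul_eq_smul_mul_pow_of_mul_eq_smul h.A_mul_Bs n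

theorem Bs_mul_pow (h : ACDRelations q c d A B Bs) (hq : q ≠ 0) (n : ℕ) :
    Bs * A ^ n = ((q ^ 2) ^ n)⁻¹ • (A ^ n * Bs) := by
  rw [h.pow_mul_Bs, smul_smul, inv_mul_cancel₀ (by positivity), one_smul]

theorem bt_pow_B_Bs (h : ACDRelations q c d A B Bs) (hσ : IsSigmaLambda σ l A B Bs) (n : ℕ) :
    bt k R σ (A ^ n) B Bs = (A ^ n * B) ⊗ₜ[k] Bs
      - ((c * d) • ((A ^ n) ⊗ₜ[k] 1) + (q ^ 2 * (c - d)) • ((A ^ n) ⊗ₜ[k] A)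
        - q ^ 4 • ((A ^ n) ⊗ₜ[k] (A ^ 2)))
      + l⁻¹ • ((Bs * A ^ n) ⊗ₜ[k] B) := by
  simp only [bt, h.B_mul_Bs, hσ.map_Bs, Algebra.algebraMap_eq_smul_one, smul_mul_assoc,
    tmul_add, tmul_sub, tmul_smul, smul_tmul']

theorem bt_pow_Bs_B (h : ACDRelations q c d A B Bs) (hσ : IsSigmaLambda σ l A B Bs) (n : ℕ) :
    bt k R σ (A ^ n) Bs B = (q ^ 2) ^ n • ((Bs * A ^ n) ⊗ₜ[k] B)
      - ((c * d) • ((A ^ n) ⊗ₜ[k] 1) + (c - d) • ((A ^ n) ⊗ₜ[k] A) - (A ^ n) ⊗ₜ[k] (A ^ 2))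
      + (l * (q ^ 2) ^ n) • ((A ^ n * B) ⊗ₜ[k] Bs) := by
  simp only [bt, h.Bs_mul_B, hσ.map_B, h.pow_mul_Bs, h.B_mul_pow, Algebra.algebraMap_eq_smul_one,
    smul_mul_assoc, smul_smul, tmul_add, tmul_sub, tmul_smul, smul_tmul']

theorem bt_pow_mul_B_Bs_A (h : ACDRelations q c d A B Bs) (hσ : IsSigmaLambda σ l A B Bs)
    (n : ℕ) :
    bt k R σ (A ^ n * B) Bs A = ((c * d) • ((A ^ n) ⊗ₜ[k] A)
        + (q ^ 2 * (c - d)) • ((A ^ (n + 1)) ⊗ₜ[k] A) - q ^ 4 • ((A ^ (n + 2)) ⊗ₜ[k] A))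
      - (A ^ n * B) ⊗ₜ[k] (Bs * A) + (A ^ (n + 1) * B) ⊗ₜ[k] Bs := by
  rw [bt, hσ.map_A, ← mul_assoc A, ← pow_succ', mul_assoc, h.B_mul_Bs]
  simp only [Algebra.algebraMap_eq_smul_one, mul_add, mul_sub, mul_smul_comm, mul_one, ← pow_succ,
    ← pow_add, add_tmul, sub_tmul, smul_tmul']

theorem bt_pow_mul_B_A_Bs (h : ACDRelations q c d A B Bs) (hσ : IsSigmaLambda σ l A B Bs)
    (hq : q ≠ 0) (n : ℕ) :
    bt k R σ (A ^ n * B) A Bs = (q ^ 2) • ((A ^ (n + 1) * B) ⊗ₜ[k] Bs)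
      - (q ^ 2) • ((A ^ n * B) ⊗ₜ[k] (Bs * A))
      + (l⁻¹ * ((q ^ 2) ^ n)⁻¹) • ((c * d) • ((A ^ n) ⊗ₜ[k] A)
        + (c - d) • ((A ^ (n + 1)) ⊗ₜ[k] A) - (A ^ (n + 2)) ⊗ₜ[k] A) := by
  rw [bt, mul_assoc, h.B_mul_A, mul_smul_comm, ← mul_assoc, ← pow_succ, h.A_mul_Bs, hσ.map_Bs,
    smul_mul_assoc, ← mul_assoc, h.Bs_mul_pow hq, smul_mul_assoc, mul_assoc, h.Bs_mul_B]
  simp only [Algebra.algebraMap_eq_smul_one, mul_add, mul_sub, mul_smul_comm, mul_one, ← pow_succ,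
    ← pow_add, add_tmul, sub_tmul, smul_tmul', tmul_smul, smul_smul, smul_add, smul_sub, mul_assoc]

end ACDRelations

theorem omega2_is_cycle_general (k R : Type) [Field k] [Ring R] [Algebra k R]
    (q c d : k) (hq0 : q ≠ 0)
    (A B Bs : R)
    (rBA : B * A = (q ^ 2) • (A * B))
    (rABs : A * Bs = (q ^ 2) • (Bs * A))
    (rBsB : Bs * B = algebraMap k R (c * d) + (c - d) • A - A ^ 2)
    (rBBs : B * Bs = algebraMap k R (c * d) + (q ^ 2 * (c - d)) • A - (q ^ 4) • A ^ 2)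
    (b : ℕ) (σ : R ≃ₐ[k] R)
    (hσA : σ A = A) (hσB : σ B = (q ^ (2 * b + 2))⁻¹ • B)
    (hσBs : σ Bs = (q ^ (2 * b + 2)) • Bs) :
    (2 : k) • bt k R σ (A ^ (b + 1)) B Bs - (2 : k) • bt k R σ (A ^ (b + 1)) Bs B
      + (4 : k) • bt k R σ (A ^ b * B) Bs A
      - (4 * (q ^ 2)⁻¹) • bt k R σ (A ^ b * B) A Bs
      + (2 * (q ^ 4 - 1)) • bt k R σ (A ^ (b + 1)) A A
      + ((1 - (q ^ 2)⁻¹) * (c * d) * (c - d)) • bt k R σ (A ^ b) 1 1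
      + (c - d) • (bt k R σ (A ^ b) Bs B - (q ^ 2)⁻¹ • bt k R σ (A ^ b) B Bs
          + (1 - q ^ 2) • bt k R σ (A ^ b) A A)
      = 0 := by
  have h : ACDRelations q c d A B Bs := ⟨rBA, rABs, rBsB, rBBs⟩
  have hσ : IsSigmaLambda σ (q ^ (2 * b + 2))⁻¹ A B Bs := ⟨hσA, hσB, by rwa [inv_inv]⟩
  simp only [h.bt_pow_B_Bs hσ, h.bt_pow_Bs_B hσ, h.bt_pow_mul_B_Bs_A hσ,
    h.bt_pow_mul_B_A_Bs hσ hq0, bt_pow_self_self hσ.map_A, bt_one_one]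
  match_scalars <;> field_simp <;> ring

/-- The twisted Hochschild 2-chain
`ω₂ = 2[A^{b+1} ⊗ B ⊗ B* − A^{b+1} ⊗ B* ⊗ B + 2 AᵇB ⊗ B* ⊗ A − 2q⁻² AᵇB ⊗ A ⊗ B*]
  + 2(q⁴−1) A^{b+1} ⊗ A ⊗ A + (1−q⁻²)cd(c−d) Aᵇ ⊗ 1 ⊗ 1
  + (c−d)[Aᵇ ⊗ B* ⊗ B − q⁻² Aᵇ ⊗ B ⊗ B* + (1−q²) Aᵇ ⊗ A ⊗ A]`
satisfies `b_σ(ω₂) = 0`, where `σ = σ_λ` with `λ = q^{-(2b+2)}`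
(`σ(A) = A`, `σ(B) = λB`, `σ(B*) = λ⁻¹B*`). -/
theorem omega2_is_cycle (k R : Type) [Field k] [CharZero k] [Ring R] [Algebra k R]
    (q c d : k) (hq0 : q ≠ 0) (hq : ∀ n : ℕ, 0 < n → q ^ n ≠ 1) (hcd : c + d ≠ 0)
    (A B Bs : R)
    (rBA : B * A = (q ^ 2) • (A * B))
    (rABs : A * Bs = (q ^ 2) • (Bs * A))
    (rBsB : Bs * B = algebraMap k R (c * d) + (c - d) • A - A ^ 2)
    (rBBs : B * Bs = algebraMap k R (c * d) + (q ^ 2 * (c - d)) • A - (q ^ 4) • A ^ 2)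
    (b : ℕ) (σ : R ≃ₐ[k] R)
    (hσA : σ A = A) (hσB : σ B = (q ^ (2 * b + 2))⁻¹ • B)
    (hσBs : σ Bs = (q ^ (2 * b + 2)) • Bs) :
    (2 : k) • bt k R σ (A ^ (b + 1)) B Bs - (2 : k) • bt k R σ (A ^ (b + 1)) Bs B
      + (4 : k) • bt k R σ (A ^ b * B) Bs A
      - (4 * (q ^ 2)⁻¹) • bt k R σ (A ^ b * B) A Bs
      + (2 * (q ^ 4 - 1)) • bt k R σ (A ^ (b + 1)) A A
      + ((1 - (q ^ 2)⁻¹) * (c * d) * (c - d)) • bt k R σ (A ^ b) 1 1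
      + (c - d) • (bt k R σ (A ^ b) Bs B - (q ^ 2)⁻¹ • bt k R σ (A ^ b) B Bs
          + (1 - q ^ 2) • bt k R σ (A ^ b) A A)
      = 0 :=
  omega2_is_cycle_general k R q c d hq0 A B Bs rBA rABs rBsB rBBs b σ hσA hσB hσBs
end
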